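/- Let G be a countable group acting on ℝ by orientation-preserving homeomorphisms, let y₀ ∈ ℝ, and let G_{y₀} denote the stabilizer of y₀. Assume G_{y₀} ≠ G. Then for every left order λ₀ on G_{y₀} there exist at least two distinct left orders on G whose restriction to G_{y₀} equals λ₀. -/

import Mathlib

/-!
Order `G` lexicographically: first by the position of the orbit point `g • y₀` in `ℝ`, and among
elements with the same orbit point (a coset `g G_{y₀}`) by `λ₀`. Left invariance of the first key
is exactly monotonicity of the action, so this is a left order extending `λ₀`. Comparing orbit
points with the reversed order of `ℝ` gives a second such order, and the two disagree on `1` and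
any `g ∉ G_{y₀}`.
-/

/-- A left-invariant strict total order on a group `G`. -/
structure LeftOrder (G : Type*) [Group G] where
  lt : G → G → Prop
  irrefl : ∀ g, ¬ lt g g
  trans : ∀ f g h, lt f g → lt g h → lt f h
  total : ∀ f g, f ≠ g → lt f g ∨ lt g f
  mul_left : ∀ f g h, lt f g → lt (h * f) (h * g)

/-- The stabilizer of `y₀ ∈ ℝ` for an action `rho : G →* Equiv.Perm ℝ`. -/
def stabilizerSubgroup {G : Type*} [Group G] (rho : G →* Equiv.Perm ℝ) (y₀ : ℝ) :
    Subgroup G where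
  carrier := {g : G | rho g y₀ = y₀}
  one_mem' := by simp
  mul_mem' := by
    intro a b ha hb
    simp only [Set.mem_setOf_eq, map_mul, Equiv.Perm.mul_apply] at *
    rw [hb, ha]
  inv_mem' := by
    intro a ha
    simp only [Set.mem_setOf_eq] at *
    calc (rho a⁻¹) y₀ = (rho a⁻¹) ((rho a) y₀) := by rw [ha]
      _ = (rho (a⁻¹ * a)) y₀ := by rw [map_mul]; rfl
      _ = y₀ := by simp

open OrderDual

namespace LeftOrder

variable {G : Type*} [Group G]

lemma one_lt_inv_mul_iff (lam : LeftOrder G) (a b : G) : lam.lt 1 (a⁻¹ * b) ↔ lam.lt a b := by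
  refine ⟨fun h => ?_, fun h => ?_⟩
  · simpa using lam.mul_left _ _ a h
  · simpa using lam.mul_left _ _ a⁻¹ h

lemma one_lt_mul (lam : LeftOrder G) {a b : G} (ha : lam.lt 1 a) (hb : lam.lt 1 b) :
    lam.lt 1 (a * b) :=
  lam.trans _ _ _ ha (by simpa using lam.mul_left _ _ a hb)

lemma one_lt_inv_of_lt_one (lam : LeftOrder G) {a : G} (ha : lam.lt a 1) : lam.lt 1 a⁻¹ := by
  simpa using (lam.one_lt_inv_mul_iff a 1).mpr ha

variable {H : Subgroup G} {X : Type*} [LinearOrder X] (pos : G → X)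
  (hpos : ∀ g h, pos g = pos h ↔ g⁻¹ * h ∈ H)
  (hmul : ∀ k g h, pos g < pos h → pos (k * g) < pos (k * h))

def lex (lam₀ : LeftOrder H) : LeftOrder G where
  lt g h := pos g < pos h ∨ ∃ x : H, g * x = h ∧ lam₀.lt 1 x
  irrefl g := by
    rintro (h | ⟨x, hx, hlt⟩)
    · exact lt_irrefl _ h
    · obtain rfl : x = 1 := Subtype.ext (by simpa using hx)
      exact lam₀.irrefl _ hlt
  trans f g h := by
    rintro (hfg | ⟨x, rfl, hx⟩) (hgh | ⟨y, rfl, hy⟩)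
    · exact .inl (hfg.trans hgh)
    · exact .inl (by rwa [← (hpos g (g * y)).mpr (by simp)])
    · exact .inl (by rwa [← (hpos f (f * x)).mpr (by simp)] at hgh)
    · exact .inr ⟨x * y, by simp [mul_assoc], lam₀.one_lt_mul hx hy⟩
  total f g hne := by
    rcases lt_trichotomy (pos f) (pos g) with hlt | heq | hgt
    · exact .inl (.inl hlt)
    · set x : H := ⟨f⁻¹ * g, (hpos f g).mp heq⟩
      have hx : x ≠ 1 := fun h => hne (inv_mul_eq_one.mp (congrArg Subtype.val h))
      rcases lam₀.total 1 x hx.symm with h1 | h1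
      · exact .inl (.inr ⟨x, by simp [x], h1⟩)
      · exact .inr (.inr ⟨x⁻¹, by simp [x], lam₀.one_lt_inv_of_lt_one h1⟩)
    · exact .inr (.inl hgt)
  mul_left f g k := by
    rintro (hfg | ⟨x, rfl, hx⟩)
    · exact .inl (hmul k f g hfg)
    · exact .inr ⟨x, mul_assoc _ _ _, hx⟩

lemma lex_lt_iff_of_inv_mul_notMem (lam₀ : LeftOrder H) {g h : G} (hgh : g⁻¹ * h ∉ H) :
    (lex pos hpos hmul lam₀).lt g h ↔ pos g < pos h := by
  refine ⟨?_, .inl⟩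
  rintro (hlt | ⟨x, rfl, -⟩)
  · exact hlt
  · exact absurd (by simp) hgh

lemma lex_lt_coe_iff (lam₀ : LeftOrder H) (a b : H) :
    (lex pos hpos hmul lam₀).lt a b ↔ lam₀.lt a b := by
  have hab : pos a = pos b := (hpos a b).mpr (a⁻¹ * b).2
  refine ⟨?_, fun h => .inr ⟨a⁻¹ * b, by simp, (lam₀.one_lt_inv_mul_iff a b).mpr h⟩⟩
  rintro (hlt | ⟨x, hx, hlt⟩)
  · exact absurd hab hlt.ne
  · obtain rfl : a * x = b := Subtype.ext hx
    simpa using lam₀.mul_left _ _ a hlt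

lemma lex_ne_lex_toDual (lam₀ : LeftOrder H) {g : G} (hg : g ∉ H) :
    lex pos hpos hmul lam₀ ≠ lex (toDual ∘ pos) hpos (fun k g h => hmul k h g) lam₀ := by
  have h1g : (1 : G)⁻¹ * g ∉ H := by simpa using hg
  have hg1 : g⁻¹ * 1 ∉ H := by simpa using hg
  have hne : pos 1 ≠ pos g := fun h => h1g ((hpos 1 g).mp h)
  intro hlm
  rcases hne.lt_or_gt with hlt | hgt
  · have h := (lex_lt_iff_of_inv_mul_notMem pos hpos hmul lam₀ h1g).mpr hlt
    rw [hlm, lex_lt_iff_of_inv_mul_notMem (toDual ∘ pos) hpos (fun k g h => hmul k h g) lam₀ h1g] at h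
    exact h.not_gt hlt
  · have h := (lex_lt_iff_of_inv_mul_notMem pos hpos hmul lam₀ hg1).mpr hgt
    rw [hlm, lex_lt_iff_of_inv_mul_notMem (toDual ∘ pos) hpos (fun k g h => hmul k h g) lam₀ hg1] at h
    exact h.not_gt hgt

end LeftOrder

section Stabilizer

variable {G : Type*} [Group G] (rho : G →* Equiv.Perm ℝ) (y₀ : ℝ)

lemma orbit_eq_orbit_iff (g h : G) :
    rho g y₀ = rho h y₀ ↔ g⁻¹ * h ∈ stabilizerSubgroup rho y₀ := by
  change _ ↔ rho (g⁻¹ * h) y₀ = y₀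
  rw [map_mul, map_inv, Equiv.Perm.mul_apply, Equiv.Perm.inv_eq_iff_eq, eq_comm]

lemma orbit_lt_orbit_mul_left (hmono : ∀ g : G, StrictMono ⇑(rho g)) (k g h : G)
    (hgh : rho g y₀ < rho h y₀) : rho (k * g) y₀ < rho (k * h) y₀ := by
  simpa only [map_mul, Equiv.Perm.mul_apply] using hmono k hgh

end Stabilizer

theorem two_extensions_of_order_on_stabilizer_general
    {G : Type*} [Group G] (rho : G →* Equiv.Perm ℝ)
    (hmono : ∀ g : G, StrictMono ⇑(rho g)) (y₀ : ℝ)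
    (hproper : stabilizerSubgroup rho y₀ ≠ ⊤)
    (lam₀ : LeftOrder ↥(stabilizerSubgroup rho y₀)) :
    ∃ lam mu : LeftOrder G, lam ≠ mu ∧
      (∀ a b : ↥(stabilizerSubgroup rho y₀), lam.lt ↑a ↑b ↔ lam₀.lt a b) ∧
      (∀ a b : ↥(stabilizerSubgroup rho y₀), mu.lt ↑a ↑b ↔ lam₀.lt a b) := by
  obtain ⟨g, hg⟩ : ∃ g, g ∉ stabilizerSubgroup rho y₀ := by
    simpa [Subgroup.eq_top_iff'] using hproper
  exact ⟨_, _, LeftOrder.lex_ne_lex_toDual (fun g => rho g y₀) (orbit_eq_orbit_iff rho y₀)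
    (orbit_lt_orbit_mul_left rho y₀ hmono) lam₀ hg,
    LeftOrder.lex_lt_coe_iff _ _ _ lam₀, LeftOrder.lex_lt_coe_iff _ _ _ lam₀⟩

/-- Let a countable group `G` act on `ℝ` by orientation-preserving
homeomorphisms, let `y₀ ∈ ℝ`, and assume the stabilizer `G_{y₀}` is a proper subgroup.
Then every left order on `G_{y₀}` extends to at least two distinct left orders on `G`. -/
theorem two_extensions_of_order_on_stabilizer
    {G : Type*} [Group G] [Countable G] (rho : G →* Equiv.Perm ℝ)
    (hmono : ∀ g : G, StrictMono ⇑(rho g)) (y₀ : ℝ)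
    (hproper : stabilizerSubgroup rho y₀ ≠ ⊤)
    (lam₀ : LeftOrder ↥(stabilizerSubgroup rho y₀)) :
    ∃ lam mu : LeftOrder G, lam ≠ mu ∧
      (∀ a b : ↥(stabilizerSubgroup rho y₀), lam.lt ↑a ↑b ↔ lam₀.lt a b) ∧
      (∀ a b : ↥(stabilizerSubgroup rho y₀), mu.lt ↑a ↑b ↔ lam₀.lt a b) :=
  two_extensions_of_order_on_stabilizer_general rho hmono y₀ hproper lam₀
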